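/- arXiv:2209.13447 — 5 statements merged into one kernel-verified Lean document; each statement's English description precedes it below -/
import Mathlib

section
/- For the ℤ-module M = ℤ ⊕ ℤ/p²ℤ with p prime, the set R(M) = {m ∈ M : ∀ a ∈ ℤ, a²m = 0 → am = 0} is not a subgroup of M; specifically, (1,1̄) and (1,0̄) belong to R(M) but their difference (0,1̄) does not. -/
lemma mem_reduced_of_fst_one (p : ℕ) (x : ZMod (p ^ 2)) :
    ((1 : ℤ), x) ∈
      {m : ℤ × ZMod (p ^ 2) | ∀ a : ℤ, a ^ 2 • m = 0 → a • m = 0} := by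
  intro a ha
  have h1 : a ^ 2 • (1 : ℤ) = 0 := congrArg Prod.fst ha
  have : a = 0 := by
    simpa [pow_eq_zero_iff] using h1
  simp [this]

/-- For `M = ℤ ⊕ ℤ/p²ℤ`, the set of reduced elements
`R(M) = {m | ∀ a : ℤ, a² • m = 0 → a • m = 0}` contains `(1,1)` and `(1,0)` but not
their difference `(0,1)`; in particular it is not (the underlying set of) a subgroup. -/
theorem reduced_elements_not_a_subgroup (p : ℕ) (hp : p.Prime) :
    ((1 : ℤ), (1 : ZMod (p ^ 2))) ∈
        {m : ℤ × ZMod (p ^ 2) | ∀ a : ℤ, a ^ 2 • m = 0 → a • m = 0} ∧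
    ((1 : ℤ), (0 : ZMod (p ^ 2))) ∈
        {m : ℤ × ZMod (p ^ 2) | ∀ a : ℤ, a ^ 2 • m = 0 → a • m = 0} ∧
    ((0 : ℤ), (1 : ZMod (p ^ 2))) ∉
        {m : ℤ × ZMod (p ^ 2) | ∀ a : ℤ, a ^ 2 • m = 0 → a • m = 0} ∧
    ∀ H : AddSubgroup (ℤ × ZMod (p ^ 2)),
      (H : Set (ℤ × ZMod (p ^ 2))) ≠
        {m : ℤ × ZMod (p ^ 2) | ∀ a : ℤ, a ^ 2 • m = 0 → a • m = 0} := by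
  have hnot : ((0 : ℤ), (1 : ZMod (p ^ 2))) ∉
      {m : ℤ × ZMod (p ^ 2) | ∀ a : ℤ, a ^ 2 • m = 0 → a • m = 0} := by
    intro h
    have h2 : ((p : ℤ) ^ 2) • ((0 : ℤ), (1 : ZMod (p ^ 2))) = 0 := by
      have : ((p : ℤ) ^ 2) • (1 : ZMod (p ^ 2)) = 0 := by
        rw [zsmul_eq_mul, mul_one]
        have : (((p : ℤ) ^ 2 : ℤ) : ZMod (p ^ 2)) = ((p ^ 2 : ℕ) : ZMod (p ^ 2)) := by
          push_cast; ring
        rw [this, ZMod.natCast_self]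
      simp [Prod.ext_iff, this]
    have h3 := h (p : ℤ) h2
    have h4 : (p : ℤ) • (1 : ZMod (p ^ 2)) = 0 := congrArg Prod.snd h3
    have h5 : ((p : ZMod (p ^ 2)) : ZMod (p ^ 2)) = 0 := by
      simpa using h4
    have h6 : p ^ 2 ∣ p := (ZMod.natCast_eq_zero_iff p (p ^ 2)).mp h5
    have : p ^ 2 ≤ p := Nat.le_of_dvd hp.pos h6
    have : p < p ^ 2 := by
      have := hp.two_le
      nlinarith
    omega
  refine ⟨mem_reduced_of_fst_one p 1, mem_reduced_of_fst_one p 0, hnot, ?_⟩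
  intro H hH
  apply hnot
  rw [← hH]
  have h1 : ((1 : ℤ), (1 : ZMod (p ^ 2))) ∈ H := by
    rw [← SetLike.mem_coe, hH]; exact mem_reduced_of_fst_one p 1
  have h2 : ((1 : ℤ), (0 : ZMod (p ^ 2))) ∈ H := by
    rw [← SetLike.mem_coe, hH]; exact mem_reduced_of_fst_one p 0
  have h3 := H.sub_mem h1 h2
  have h4 : (((1 : ℤ), (1 : ZMod (p ^ 2))) - ((1 : ℤ), (0 : ZMod (p ^ 2)))) =
      (((0 : ℤ), (1 : ZMod (p ^ 2)))) := by
    simp [Prod.ext_iff]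
  rwa [h4] at h3
end

section
/- Let k be a field, R = k[x₁,…,xₙ], I a monomial ideal of R with dim_k(R/I) < ∞, and M = R/I. Then the set R(M) = {m ∈ M : ∀ a ∈ R, a²m = 0 → am = 0} equals the socle of M, i.e., R(M) = (0 :_M ⟨x₁,…,xₙ⟩) = {m ∈ M : xᵢ·m = 0 for all i}. -/
/-!
Each variable acts nilpotently on `R/I`: it is integral over `k` by finite-dimensionality, and
since `I` is a monomial ideal the leading monomial `Xᵢ ^ N` of its monic relation already lies
in `I`. If `a² m = 0 → a m = 0` for all `a`, repeated squaring turns `aᴺ m = 0`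
into `a m = 0`, so `m` lies in the socle. Conversely, on the socle every `a`
acts through its constant term `c`, and `c² m = 0` forces `c m = 0` over a field.
-/

open MvPolynomial

/-- `I` is a monomial ideal of `k[x₁,…,xₙ]`. -/
def IsMonomialIdeal {k : Type*} [Field k] {n : ℕ}
    (I : Ideal (MvPolynomial (Fin n) k)) : Prop :=
  ∃ S : Set (Fin n →₀ ℕ), I = Ideal.span ((fun d => monomial d (1 : k)) '' S)

theorem smul_eq_zero_of_pow_smul_eq_zero {R M : Type*} [Monoid R] [AddMonoid M]
    [DistribMulAction R M] {m : M} (hm : ∀ a : R, a ^ 2 • m = 0 → a • m = 0)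
    {a : R} {n : ℕ} (h : a ^ n • m = 0) : a • m = 0 := by
  have descend : ∀ j : ℕ, a ^ 2 ^ j • m = 0 → a • m = 0 := by
    intro j
    induction j with
    | zero => simp
    | succ j ih => exact fun hj => ih (hm _ (by rwa [← pow_mul, ← pow_succ]))
  apply descend n
  rw [← Nat.sub_add_cancel n.lt_two_pow_self.le, pow_add, mul_smul, h, smul_zero]

namespace MvPolynomial

variable {σ R : Type*}

theorem coeff_single_aeval_X [CommSemiring R] (i : σ) (p : Polynomial R) (N : ℕ) :
    coeff (Finsupp.single i N) (Polynomial.aeval (X i : MvPolynomial σ R) p) = p.coeff N := by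
  classical
  simp only [Polynomial.aeval_def, Polynomial.eval₂_eq_sum, Polynomial.sum_def, coeff_sum,
    X_pow_eq_monomial, algebraMap_eq, C_mul_monomial, mul_one, coeff_monomial,
    (Finsupp.single_injective i).eq_iff, Finset.sum_ite_eq']
  split_ifs with hN
  · rfl
  · exact (Polynomial.notMem_support_iff.mp hN).symm

theorem monomial_mem_span_monomial_image_of_mem_support [CommSemiring R] {S : Set (σ →₀ ℕ)}
    {f : MvPolynomial σ R} (hf : f ∈ Ideal.span ((fun d => monomial d (1 : R)) '' S))
    {d : σ →₀ ℕ} (hd : d ∈ f.support) :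
    monomial d (1 : R) ∈ Ideal.span ((fun d => monomial d (1 : R)) '' S) := by
  rw [mem_ideal_span_monomial_image] at hf ⊢
  intro d' hd'
  rw [Finset.mem_singleton.mp (support_monomial_subset hd')]
  exact hf d hd

theorem exists_X_pow_mem_of_isIntegral [CommRing R] [Nontrivial R] {S : Set (σ →₀ ℕ)}
    (i : σ) (hi : IsIntegral R
      (Ideal.Quotient.mk (Ideal.span ((fun d => monomial d (1 : R)) '' S)) (X i))) :
    ∃ N : ℕ, X i ^ N ∈ Ideal.span ((fun d => monomial d (1 : R)) '' S) := by
  obtain ⟨p, hmonic, hp⟩ := hi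
  have hpI : Polynomial.aeval (X i) p ∈ Ideal.span ((fun d => monomial d (1 : R)) '' S) := by
    rw [← Ideal.Quotient.eq_zero_iff_mem, ← Ideal.Quotient.mkₐ_eq_mk R,
      ← Polynomial.aeval_algHom_apply, Ideal.Quotient.mkₐ_eq_mk]
    exact hp
  refine ⟨p.natDegree, X_pow_eq_monomial (R := R) .. ▸
    monomial_mem_span_monomial_image_of_mem_support hpI ?_⟩
  rw [mem_support_iff, coeff_single_aeval_X, hmonic.coeff_natDegree]
  exact one_ne_zero

theorem smul_eq_constantCoeff_smul [CommSemiring R] {M : Type*} [AddCommMonoid M] [Module R M]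
    [Module (MvPolynomial σ R) M] [IsScalarTower R (MvPolynomial σ R) M] {m : M}
    (hm : ∀ i, (X i : MvPolynomial σ R) • m = 0) (b : MvPolynomial σ R) :
    b • m = constantCoeff b • m := by
  induction b using MvPolynomial.induction_on with
  | C a => rw [constantCoeff_C, ← algebraMap_eq, algebraMap_smul]
  | add p q hp hq => rw [add_smul, hp, hq, map_add, add_smul]
  | mul_X p i _ => rw [mul_smul, hm, smul_zero, map_mul, constantCoeff_X, mul_zero, zero_smul]

end MvPolynomial

theorem reduced_eq_socle_general {k : Type*} [Field k] {n : ℕ}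
    (I : Ideal (MvPolynomial (Fin n) k)) (hI : IsMonomialIdeal I)
    [FiniteDimensional k (MvPolynomial (Fin n) k ⧸ I)] :
    {m : MvPolynomial (Fin n) k ⧸ I |
        ∀ a : MvPolynomial (Fin n) k, a ^ 2 • m = 0 → a • m = 0} =
      {m : MvPolynomial (Fin n) k ⧸ I |
        ∀ i : Fin n, (X i : MvPolynomial (Fin n) k) • m = 0} := by
  ext m
  constructor
  · intro hm i
    obtain ⟨S, rfl⟩ := hI
    obtain ⟨N, hN⟩ := exists_X_pow_mem_of_isIntegral (S := S) i (.of_finite k _)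
    refine smul_eq_zero_of_pow_smul_eq_zero hm (n := N) ?_
    exact Module.mem_annihilator.mp (by rwa [Ideal.annihilator_quotient]) m
  · intro hm a ha
    rw [smul_eq_constantCoeff_smul hm, smul_eq_zero] at ha ⊢
    simpa using ha

/-- For `M = R/I` with `I` a monomial ideal and `dim_k R/I < ∞`, the set of reduced
elements of `M` equals the socle `(0 :_M ⟨x₁,…,xₙ⟩)`. -/
theorem reduced_eq_socle {k : Type*} [Field k] [CharZero k] {n : ℕ}
    (I : Ideal (MvPolynomial (Fin n) k)) (hI : IsMonomialIdeal I)
    [FiniteDimensional k (MvPolynomial (Fin n) k ⧸ I)] :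
    {m : MvPolynomial (Fin n) k ⧸ I |
        ∀ a : MvPolynomial (Fin n) k, a ^ 2 • m = 0 → a • m = 0} =
      {m : MvPolynomial (Fin n) k ⧸ I |
        ∀ i : Fin n, (X i : MvPolynomial (Fin n) k) • m = 0} :=
  reduced_eq_socle_general I hI
end

section
/- Let k be a field, R = k[x₁,…,xₙ], I a monomial ideal with dim_k(R/I) < ∞, and M = R/I. Then R(M) = {m ∈ M : ∀a ∈ R, a²m = 0 → am = 0} is a k-submodule of M, namely the k-span of the outside corner elements (those monomial basis elements m with xᵢ·m = 0 for all i). -/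
set_option maxHeartbeats 1000000

open MvPolynomial

/-- Any monomial whose exponent dominates an exponent from `S` lies in the monomial ideal. -/
lemma monomial_mem_monomialIdeal_span {k : Type*} [Field k] {n : ℕ}
    {S : Set (Fin n →₀ ℕ)} {d e : Fin n →₀ ℕ} (hd : d ∈ S) (hde : d ≤ e)
    (c : k) : monomial e c ∈ Ideal.span ((fun d => monomial d (1 : k)) '' S) := by
  have h : monomial e c = monomial (e - d) c * monomial d 1 := by
    rw [monomial_mul, mul_one, tsub_add_cancel_of_le hde]
  rw [h]
  exact Ideal.mul_mem_left _ _ (Ideal.subset_span ⟨d, hd, rfl⟩)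

/-- Every exponent in the support of an element of a monomial ideal dominates a generator. -/
lemma exists_le_of_mem_support_monomialIdeal {k : Type*} [Field k] {n : ℕ}
    {S : Set (Fin n →₀ ℕ)} {f : MvPolynomial (Fin n) k}
    (hf : f ∈ Ideal.span ((fun d => monomial d (1 : k)) '' S)) :
    ∀ e ∈ f.support, ∃ d ∈ S, d ≤ e := by
  refine Submodule.span_induction ?_ ?_ ?_ ?_ hf
  · rintro x ⟨d, hd, rfl⟩ e he
    classical
    rw [MvPolynomial.support_monomial, if_neg (one_ne_zero (α := k)),
      Finset.mem_singleton] at he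
    exact ⟨d, hd, he ▸ le_refl _⟩
  · simp
  · intro x y _ _ px py e he
    rcases Finset.mem_union.1 (MvPolynomial.support_add he) with h | h
    exacts [px e h, py e h]
  · intro r x _ px e he
    rw [smul_eq_mul] at he
    classical
    obtain ⟨a, _, b, hb, rfl⟩ := Finset.mem_add.1 (MvPolynomial.support_mul r x he)
    obtain ⟨d, hd, hdb⟩ := px b hb
    exact ⟨d, hd, hdb.trans le_add_self⟩

/-- For every variable, some power of it lies in a monomial ideal with finite-dimensional
quotient. -/
lemma exists_single_dominating {k : Type*} [Field k] {n : ℕ}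
    (S : Set (Fin n →₀ ℕ)) (J : Ideal (MvPolynomial (Fin n) k))
    (hJ : J = Ideal.span ((fun d => monomial d (1 : k)) '' S))
    [FiniteDimensional k (MvPolynomial (Fin n) k ⧸ J)]
    (i : Fin n) : ∃ t : ℕ, ∃ d ∈ S, d ≤ Finsupp.single i t := by
  subst hJ
  set J : Ideal (MvPolynomial (Fin n) k) := Ideal.span ((fun d => monomial d (1 : k)) '' S) with hJ
  have hint : Algebra.IsIntegral k (MvPolynomial (Fin n) k ⧸ J) := Algebra.IsIntegral.of_finite _ _
  obtain ⟨p, hpm, hp0⟩ := Algebra.IsIntegral.isIntegral (R := k) (Ideal.Quotient.mk J (X i))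
  have hmem : (Polynomial.aeval (X i : MvPolynomial (Fin n) k) p) ∈ J := by
    rw [← Ideal.Quotient.eq_zero_iff_mem]
    have h := Polynomial.aeval_algHom_apply (Ideal.Quotient.mkₐ k J) (X i) p
    rw [Ideal.Quotient.mkₐ_eq_mk] at h
    rw [← h]
    exact hp0
  have hcoeff : MvPolynomial.coeff (Finsupp.single i p.natDegree)
      (Polynomial.aeval (X i : MvPolynomial (Fin n) k) p) = 1 := by
    have hsum : (Polynomial.aeval (X i : MvPolynomial (Fin n) k) p) =
        ∑ j ∈ Finset.range (p.natDegree + 1), monomial (Finsupp.single i j) (p.coeff j) := by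
      rw [Polynomial.aeval_eq_sum_range]
      refine Finset.sum_congr rfl fun j _ => ?_
      rw [X_pow_eq_monomial, smul_monomial, smul_eq_mul, mul_one]
    rw [hsum, MvPolynomial.coeff_sum]
    have hterm : ∀ j ∈ Finset.range (p.natDegree + 1),
        MvPolynomial.coeff (Finsupp.single i p.natDegree)
            (monomial (Finsupp.single i j) (p.coeff j))
          = if j = p.natDegree then p.coeff j else 0 := by
      intro j _
      classical
      rw [MvPolynomial.coeff_monomial]
      congr 1
      simp [(Finsupp.single_injective i).eq_iff]
    rw [Finset.sum_congr rfl hterm, Finset.sum_ite_eq' _ _ _,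
      if_pos (Finset.mem_range.2 (Nat.lt_succ_self _)), Polynomial.Monic.coeff_natDegree hpm]
  refine ⟨p.natDegree, exists_le_of_mem_support_monomialIdeal hmem _ ?_⟩
  rw [MvPolynomial.mem_support_iff, hcoeff]
  exact one_ne_zero

/-- For `M = R/I` with `I` a monomial ideal and `dim_k R/I < ∞`, the set of reduced
elements of `M` is a `k`-submodule: it is the `k`-span of the outside corner elements,
i.e. the nonzero images of monomials that are killed by every `xᵢ`. -/
theorem reduced_eq_span_outside_corners {k : Type*} [Field k] [CharZero k] {n : ℕ}
    (I : Ideal (MvPolynomial (Fin n) k)) (hI : IsMonomialIdeal I)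
    [FiniteDimensional k (MvPolynomial (Fin n) k ⧸ I)] :
    {m : MvPolynomial (Fin n) k ⧸ I |
        ∀ a : MvPolynomial (Fin n) k, a ^ 2 • m = 0 → a • m = 0} =
      (Submodule.span k {m : MvPolynomial (Fin n) k ⧸ I |
          (∃ d : Fin n →₀ ℕ, m = Ideal.Quotient.mk I (monomial d (1 : k))) ∧ m ≠ 0 ∧
          ∀ i : Fin n, (X i : MvPolynomial (Fin n) k) • m = 0} :
        Set (MvPolynomial (Fin n) k ⧸ I)) := by
  obtain ⟨S, rfl⟩ := hI
  set J : Ideal (MvPolynomial (Fin n) k) := Ideal.span ((fun d => monomial d (1 : k)) '' S)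
    with hJdef
  -- the k-scalar action on the quotient, expressed via lifts
  have hksmul : ∀ (c : k) (g : MvPolynomial (Fin n) k),
      c • Ideal.Quotient.mk J g = Ideal.Quotient.mk J (C c * g) := by
    intro c g
    rw [← algebraMap_smul (MvPolynomial (Fin n) k) c (Ideal.Quotient.mk J g),
      MvPolynomial.algebraMap_eq]
    rfl
  ext m
  simp only [Set.mem_setOf_eq, SetLike.mem_coe]
  constructor
  · -- reduced ⟹ in the span of outside corners
    intro hm
    -- every variable kills m
    have hX : ∀ i : Fin n, (X i : MvPolynomial (Fin n) k) • m = 0 := by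
      -- step-down using reducedness
      have hstep : ∀ s : ℕ, ∀ i : Fin n, (X i : MvPolynomial (Fin n) k) ^ s • m = 0 →
          (X i : MvPolynomial (Fin n) k) • m = 0 := by
        intro s
        induction s using Nat.strong_induction_on with
        | _ s ih =>
          match s with
          | 0 => intro i h0; rw [pow_zero, one_smul] at h0; rw [h0, smul_zero]
          | 1 => intro i h1; rwa [pow_one] at h1
          | (s + 2) =>
            intro i hs
            have h2 : ((X i : MvPolynomial (Fin n) k) ^ (s + 1)) ^ 2 • m = 0 := by
              rw [← pow_mul, show (s + 1) * 2 = s + (s + 2) by ring, pow_add, mul_smul, hs,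
                smul_zero]
            exact ih (s + 1) (by omega) i (hm _ h2)
      intro i
      obtain ⟨t, d, hd, hle⟩ := exists_single_dominating S J hJdef i
      apply hstep t
      obtain ⟨f, rfl⟩ := Ideal.Quotient.mk_surjective m
      show Ideal.Quotient.mk J ((X i : MvPolynomial (Fin n) k) ^ t * f) = 0
      rw [Ideal.Quotient.eq_zero_iff_mem]
      refine Ideal.mul_mem_right _ _ ?_
      rw [X_pow_eq_monomial]
      exact monomial_mem_monomialIdeal_span hd hle 1
    -- decompose m into monomials
    obtain ⟨f, rfl⟩ := Ideal.Quotient.mk_surjective m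
    have hdecomp : Ideal.Quotient.mk J f =
        ∑ e ∈ f.support, Ideal.Quotient.mk J (monomial e (coeff e f)) := by
      rw [← map_sum, ← MvPolynomial.as_sum]
    rw [hdecomp]
    apply Submodule.sum_mem
    intro e he
    by_cases hT : ∃ d ∈ S, d ≤ e
    · obtain ⟨d, hd, hde⟩ := hT
      have : Ideal.Quotient.mk J (monomial e (coeff e f)) = 0 :=
        Ideal.Quotient.eq_zero_iff_mem.2 (monomial_mem_monomialIdeal_span hd hde _)
      rw [this]
      exact Submodule.zero_mem _
    · -- outside corner
      have hcorner : Ideal.Quotient.mk J (monomial e (1 : k)) ∈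
          {m : MvPolynomial (Fin n) k ⧸ J |
            (∃ d : Fin n →₀ ℕ, m = Ideal.Quotient.mk J (monomial d (1 : k))) ∧ m ≠ 0 ∧
            ∀ i : Fin n, (X i : MvPolynomial (Fin n) k) • m = 0} := by
        refine ⟨⟨e, rfl⟩, ?_, ?_⟩
        · intro h0
          rw [Ideal.Quotient.eq_zero_iff_mem] at h0
          have := exists_le_of_mem_support_monomialIdeal h0 e ?_
          · exact hT this
          · classical
            rw [MvPolynomial.support_monomial, if_neg (one_ne_zero (α := k))]
            exact Finset.mem_singleton_self e
        · intro i
          -- X i * f ∈ J, and its coefficient at single i 1 + e is coeff e f ≠ 0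
          have hXf : (X i : MvPolynomial (Fin n) k) * f ∈ J := by
            rw [← Ideal.Quotient.eq_zero_iff_mem]
            exact hX i
          have hmemsup : Finsupp.single i 1 + e ∈ ((X i : MvPolynomial (Fin n) k) * f).support := by
            rw [MvPolynomial.mem_support_iff, MvPolynomial.coeff_X_mul]
            exact MvPolynomial.mem_support_iff.1 he
          obtain ⟨d, hd, hle⟩ := exists_le_of_mem_support_monomialIdeal hXf _ hmemsup
          show Ideal.Quotient.mk J ((X i : MvPolynomial (Fin n) k) * monomial e 1) = 0
          rw [Ideal.Quotient.eq_zero_iff_mem, X, monomial_mul, one_mul]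
          exact monomial_mem_monomialIdeal_span hd hle 1
      have heq : Ideal.Quotient.mk J (monomial e (coeff e f)) =
          coeff e f • Ideal.Quotient.mk J (monomial e (1 : k)) := by
        rw [hksmul, C_mul_monomial, mul_one]
      rw [heq]
      exact Submodule.smul_mem _ _ (Submodule.subset_span hcorner)
  · -- span of outside corners ⟹ reduced
    intro hm a ha
    -- every variable kills m
    have hX : ∀ i : Fin n, (X i : MvPolynomial (Fin n) k) • m = 0 := by
      intro i
      refine Submodule.span_induction (fun x hx => hx.2.2 i) (smul_zero _) ?_ ?_ hm
      · intro x y _ _ hx hy; rw [smul_add, hx, hy, add_zero]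
      · intro c x _ hx
        rw [← algebraMap_smul (MvPolynomial (Fin n) k) c x, smul_smul, mul_comm, ← smul_smul,
          hx, smul_zero]
    -- every polynomial acts by its constant coefficient
    have hconst : ∀ p : MvPolynomial (Fin n) k, p • m = constantCoeff p • m := by
      intro p
      induction p using MvPolynomial.induction_on with
      | C c => rw [constantCoeff_C, ← MvPolynomial.algebraMap_eq, algebraMap_smul]
      | add p q hp hq => rw [add_smul, hp, hq, map_add, add_smul]
      | mul_X p i hp => rw [mul_smul, hX i, smul_zero, map_mul, constantCoeff_X, mul_zero, zero_smul]
    rw [hconst] at ha ⊢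
    rw [map_pow] at ha
    by_cases hc : constantCoeff a = 0
    · rw [hc, zero_smul]
    · have hm0 : m = 0 := by
        have := congrArg (fun z => ((constantCoeff a ^ 2)⁻¹ : k) • z) ha
        simpa [smul_smul, inv_mul_cancel₀ (pow_ne_zero 2 hc)] using this
      rw [hm0, smul_zero]
end

section
/- Let R = k[x₁,…,xₙ] act on Γ = k[X₁,…,Xₙ] by the apolarity (contraction) action x^α ∘ X^β = (β!/(β−α)!) X^{β−α} if β ≥ α componentwise and 0 otherwise. Then the largest reduced R-submodule of Γ is k (the constants); i.e., an element f ∈ Γ satisfies (∀ a ∈ R, a² ∘ f = 0 → a ∘ f = 0) if and only if f ∈ k. -/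
/-!
A nonconstant `f` involves some variable `Xᵢ`, say to the exact degree `m > 0`.
For `a = xᵢ ^ m` the square acts as `∂ᵢ^(2m)`, which kills `f`, whereas `a` acts as `∂ᵢ^m`,
which sends a monomial of `f` of `Xᵢ`-degree `m` to `m!` times a nonzero coefficient;
so `f` is not reduced. Conversely, every `a` acts on a constant `c` as multiplication by
its constant term `a(0)`, and `a(0)² c = 0` forces `a(0) c = 0`.
-/

open MvPolynomial

namespace MvPolynomial

variable {R σ : Type*} [CommSemiring R]

theorem coeff_iterate_pderiv (i : σ) (m : ℕ) (p : MvPolynomial σ R) (d : σ →₀ ℕ) :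
    coeff d ((pderiv i)^[m] p) = coeff (d + Finsupp.single i m) p * (d i + m).descFactorial m := by
  induction m generalizing p with
  | zero => simp
  | succ m ih =>
    rw [Function.iterate_succ_apply, ih, coeff_pderiv, add_assoc, ← Finsupp.single_add,
      Finsupp.add_apply, Finsupp.single_eq_same, ← add_assoc (d i), Nat.succ_descFactorial_succ]
    push_cast
    ring_nf

theorem iterate_pderiv_eq_zero_of_degreeOf_lt {i : σ} {m : ℕ} {p : MvPolynomial σ R}
    (h : p.degreeOf i < m) : (pderiv i)^[m] p = 0 := by
  ext d
  rw [coeff_iterate_pderiv, coeff_zero, notMem_support_iff.mp, zero_mul]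
  intro hd
  have hle := monomial_le_degreeOf i hd
  simp only [Finsupp.add_apply, Finsupp.single_eq_same] at hle
  omega

theorem iterate_pderiv_degreeOf_ne_zero [NoZeroDivisors R] [CharZero R] (i : σ)
    {p : MvPolynomial σ R} (hp : p ≠ 0) : (pderiv i)^[p.degreeOf i] p ≠ 0 := by
  obtain ⟨s, hs, hsi⟩ := Finset.exists_mem_eq_sup _ (support_nonempty.mpr hp) (fun s => s i)
  rw [← degreeOf_eq_sup] at hsi
  intro h
  have hcoeff := congrArg (coeff (s.erase i)) h
  rw [coeff_iterate_pderiv, coeff_zero, hsi, Finsupp.erase_add_single, Finsupp.erase_same,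
    zero_add, Nat.descFactorial_self] at hcoeff
  exact mul_ne_zero (mem_support_iff.mp hs) (Nat.cast_ne_zero.mpr (Nat.factorial_ne_zero _))
    hcoeff

end MvPolynomial

section Apolarity

variable {R σ : Type*} [CommSemiring R]
  {φ : MvPolynomial σ R →ₐ[R] Module.End R (MvPolynomial σ R)}

theorem apolarity_X_pow_apply (hφ : ∀ i, φ (X i) = (pderiv i).toLinearMap) (i : σ) (m : ℕ)
    (f : MvPolynomial σ R) : φ (X i ^ m) f = (pderiv i)^[m] f := by
  rw [map_pow, hφ, Module.End.pow_apply]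
  rfl

theorem apolarity_apply_C (hφ : ∀ i, φ (X i) = (pderiv i).toLinearMap) (a : MvPolynomial σ R)
    (c : R) : φ a (C c) = C (constantCoeff a * c) := by
  induction a using MvPolynomial.induction_on with
  | C r =>
    rw [constantCoeff_C, C_mul, ← smul_eq_C_mul, ← Module.algebraMap_end_apply R R,
      ← AlgHom.commutes φ, algebraMap_eq]
  | add p q hp hq => rw [map_add, LinearMap.add_apply, hp, hq, map_add, add_mul, C_add]
  | mul_X p i _ =>
    rw [map_mul φ, Module.End.mul_apply, hφ, Derivation.coeFn_coe, pderiv_C, map_zero,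
      map_mul constantCoeff, constantCoeff_X, mul_zero, zero_mul, C_0]

end Apolarity

/-- Let `R = k[x₁,…,xₙ]` act on `Γ = k[X₁,…,Xₙ]` by the apolarity action, i.e. via the
`k`-algebra homomorphism `φ : R → End_k(Γ)` sending each `xᵢ` to the partial derivative
`∂/∂Xᵢ`.  Then the largest reduced `R`-submodule of `Γ` is `k`: an element `f ∈ Γ`
satisfies `∀ a ∈ R, a² ∘ f = 0 → a ∘ f = 0` if and only if `f` is a constant. -/
theorem largest_reduced_submodule_eq_constants {k : Type*} [Field k] [CharZero k] {n : ℕ}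
    (φ : MvPolynomial (Fin n) k →ₐ[k] Module.End k (MvPolynomial (Fin n) k))
    (hφ : ∀ i : Fin n, φ (X i) = (pderiv i).toLinearMap)
    (f : MvPolynomial (Fin n) k) :
    (∀ a : MvPolynomial (Fin n) k, φ (a ^ 2) f = 0 → φ a f = 0) ↔ ∃ c : k, f = C c := by
  constructor
  · intro hred
    by_contra hconst
    obtain ⟨i, hi⟩ : f.vars.Nonempty :=
      Finset.nonempty_iff_ne_empty.mpr fun h => hconst ⟨_, vars_eq_empty_iff_eq_C.mp h⟩
    have hdeg : f.degreeOf i ≠ 0 := mem_vars_iff_degreeOf_ne_zero.mp hi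
    have hf : f ≠ 0 := fun h => hconst ⟨0, by rw [h, C_0]⟩
    have hsq : φ ((X i ^ f.degreeOf i) ^ 2) f = 0 := by
      rw [← pow_mul, apolarity_X_pow_apply hφ]
      exact iterate_pderiv_eq_zero_of_degreeOf_lt (by omega)
    exact iterate_pderiv_degreeOf_ne_zero i hf (apolarity_X_pow_apply hφ i _ f ▸ hred _ hsq)
  · rintro ⟨c, rfl⟩ a ha
    rw [apolarity_apply_C hφ, C_eq_zero] at ha ⊢
    simpa using ha
end

section
/- Let k be a field, R = k[x₁,…,xₙ], I ⊆ m = ⟨x₁,…,xₙ⟩ a monomial ideal with dim_k(R/I) < ∞, and M = R/I. Then the submodule generated by the envelope of 0, ⟨E_M(0)⟩ where E_M(0) = {r·m : r ∈ R, m ∈ M, rᵏm = 0 for some k ≥ 1}, equals m·M = m/I; consequently ⟨E_M(0)⟩ equals the prime radical β(M) and the Jacobson radical J(M), so the zero submodule of M satisfies the radical formula. -/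
open MvPolynomial

/-!
Finite-dimensionality makes each `xᵢ` integral over `k` modulo `I`; a monic relation, read
in `k[xᵢ] ⊆ k[x₁,…,xₙ]`, has its leading monomial `xᵢ^d` in its support, so `xᵢ^d ∈ I`
because a monomial ideal contains every monomial of each of its elements. Hence the maximal
ideal `𝔪 = ⟨x₁,…,xₙ⟩` satisfies `I ≤ 𝔪 ≤ √I = √(Ann M)`. On a module `M` with
`𝔪 ≤ √(Ann M)`, elements of `𝔪` act nilpotently and elements `r ∉ 𝔪` act injectively
(write `s r + y = 1` with `y ∈ 𝔪`), so the envelope of `0` spans exactly `𝔪 M`, and every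
prime submodule contains `𝔪 M`. Finally `𝔪 M = 𝔪 / I` is a maximal, hence prime, submodule
of `R / I`, so it is both the smallest prime and the smallest maximal submodule.
-/

namespace Submodule

variable {R M : Type*} [CommSemiring R] [AddCommMonoid M] [Module R M]

def IsPrime (P : Submodule R M) : Prop :=
  P ≠ ⊤ ∧ ∀ (a : R) (m : M), a • m ∈ P → m ∈ P ∨ ∀ x : M, a • x ∈ P

def envelope (N : Submodule R M) : Set M :=
  {x | ∃ (r : R) (m : M), x = r • m ∧ ∃ t : ℕ, 1 ≤ t ∧ r ^ t • m ∈ N}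

theorem isPrime_of_isCoatom {N : Submodule R M} (hN : IsCoatom N) : N.IsPrime := by
  refine ⟨hN.1, fun a m ham => or_iff_not_imp_left.mpr fun hm x => ?_⟩
  have hx : x ∈ N ⊔ span R {m} := by
    rw [hN.2 _ (left_lt_sup.mpr fun h => hm (h (mem_span_singleton_self m)))]
    exact mem_top
  obtain ⟨u, hu, v, hv, rfl⟩ := mem_sup.mp hx
  obtain ⟨s, rfl⟩ := mem_span_singleton.mp hv
  rw [smul_add, smul_comm]
  exact N.add_mem (N.smul_mem a hu) (N.smul_mem s ham)

theorem IsPrime.smul_mem_of_pow_smul_mem {P : Submodule R M} (hP : P.IsPrime) {a : R} {x : M} :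
    ∀ {t : ℕ}, a ^ t • x ∈ P → a • x ∈ P
  | 0, h => P.smul_mem a (by rwa [pow_zero, one_smul] at h)
  | t + 1, h => by
    rw [pow_succ', mul_smul] at h
    exact (hP.2 a _ h).elim hP.smul_mem_of_pow_smul_mem (· x)

theorem IsPrime.smul_top_le {P : Submodule R M} (hP : P.IsPrime) {J : Ideal R}
    (hJ : J ≤ (Module.annihilator R M).radical) : J • (⊤ : Submodule R M) ≤ P := by
  refine smul_le.mpr fun r hr m _ => ?_
  obtain ⟨t, ht⟩ := hJ hr
  refine hP.smul_mem_of_pow_smul_mem (t := t) ?_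
  rw [Module.mem_annihilator.mp ht]
  exact P.zero_mem

theorem smul_top_le_span_envelope_bot {J : Ideal R} (hJ : J ≤ (Module.annihilator R M).radical) :
    J • (⊤ : Submodule R M) ≤ span R (⊥ : Submodule R M).envelope := by
  refine smul_le.mpr fun r hr m _ => subset_span ⟨r, m, rfl, ?_⟩
  obtain ⟨t, ht⟩ := hJ hr
  refine ⟨t + 1, Nat.le_add_left 1 t, ?_⟩
  rw [pow_succ', mul_smul, Module.mem_annihilator.mp ht, smul_zero]
  exact zero_mem _

theorem eq_zero_of_smul_eq_zero_of_notMem {𝔪 : Ideal R} [𝔪.IsMaximal]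
    (h𝔪 : 𝔪 ≤ (Module.annihilator R M).radical) {r : R} (hr : r ∉ 𝔪) {m : M}
    (h : r • m = 0) : m = 0 := by
  obtain ⟨s, y, hy, hsy⟩ := Ideal.IsMaximal.exists_inv ‹_› hr
  obtain ⟨t, ht⟩ := h𝔪 hy
  have hym : y • m = m := calc
    y • m = (s * r + y) • m := by rw [add_smul, mul_smul, h, smul_zero, zero_add]
    _ = m := by rw [hsy, one_smul]
  have hytm : ∀ t : ℕ, y ^ t • m = m := by
    intro t
    induction t with
    | zero => rw [pow_zero, one_smul]
    | succ t ih => rw [pow_succ, mul_smul, hym, ih]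
  rw [← hytm t, Module.mem_annihilator.mp ht]

theorem span_envelope_bot_le_smul_top {𝔪 : Ideal R} [𝔪.IsMaximal]
    (h𝔪 : 𝔪 ≤ (Module.annihilator R M).radical) :
    span R (⊥ : Submodule R M).envelope ≤ 𝔪 • ⊤ := by
  refine span_le.mpr ?_
  rintro _ ⟨r, m, rfl, t, ht, hrt⟩
  by_cases hr : r ∈ 𝔪
  · exact smul_mem_smul hr mem_top
  · have hrt𝔪 : r ^ t ∉ 𝔪 := fun h => hr (Ideal.IsPrime.mem_of_pow_mem inferInstance t h)
    rw [eq_zero_of_smul_eq_zero_of_notMem h𝔪 hrt𝔪 ((mem_bot R).mp hrt), smul_zero]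
    exact zero_mem _

theorem span_envelope_bot_eq_smul_top {𝔪 : Ideal R} [𝔪.IsMaximal]
    (h𝔪 : 𝔪 ≤ (Module.annihilator R M).radical) :
    span R (⊥ : Submodule R M).envelope = 𝔪 • ⊤ :=
  (span_envelope_bot_le_smul_top h𝔪).antisymm (smul_top_le_span_envelope_bot h𝔪)

theorem sInf_isPrime_eq_smul_top {J : Ideal R} (hJ : J ≤ (Module.annihilator R M).radical)
    (hprime : (J • ⊤ : Submodule R M).IsPrime) :
    sInf {P : Submodule R M | P.IsPrime} = J • ⊤ :=
  le_antisymm (sInf_le hprime) (le_sInf fun _ hP => hP.smul_top_le hJ)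

end Submodule

theorem Module.jacobson_eq_smul_top {R M : Type*} [CommRing R] [AddCommGroup M]
    [Module R M] {J : Ideal R} (hJ : J ≤ (Module.annihilator R M).radical)
    (hcoatom : IsCoatom (J • ⊤ : Submodule R M)) :
    Module.jacobson R M = J • ⊤ :=
  le_antisymm (sInf_le hcoatom)
    (le_sInf fun _ hN => (Submodule.isPrime_of_isCoatom hN).smul_top_le hJ)

theorem Ideal.isCoatom_smul_top_quotient {R : Type*} [CommRing R] {I 𝔪 : Ideal R}
    [𝔪.IsMaximal] (h : I ≤ 𝔪) : IsCoatom (𝔪 • ⊤ : Submodule R (R ⧸ I)) := by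
  have hmap := Submodule.map_smul'' 𝔪 ⊤ (Submodule.mkQ I)
  rw [Submodule.map_top, Submodule.range_mkQ, smul_eq_mul, Ideal.mul_top] at hmap
  rw [← hmap]
  exact Submodule.isCoatom_map_of_ker_le (Submodule.mkQ_surjective I)
    (by rwa [Submodule.ker_mkQ]) (Ideal.isMaximal_def.mp ‹_›)

theorem Polynomial.coeff_toMvPolynomial_single {R σ : Type*} [CommSemiring R] (i : σ)
    (q : Polynomial R) (j : ℕ) :
    MvPolynomial.coeff (Finsupp.single i j) (q.toMvPolynomial i) = q.coeff j := by
  classical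
  induction q using Polynomial.induction_on' with
  | add p q hp hq => rw [map_add, MvPolynomial.coeff_add, Polynomial.coeff_add, hp, hq]
  | monomial m a =>
    simp [Polynomial.toMvPolynomial, MvPolynomial.coeff_X_pow, Polynomial.coeff_monomial,
      (Finsupp.single_injective i).eq_iff]

theorem MvPolynomial.span_range_X_eq_ker_constantCoeff {R σ : Type*} [CommSemiring R] :
    Ideal.span (Set.range X) = RingHom.ker (constantCoeff : MvPolynomial σ R →+* R) := by
  ext p
  rw [← Set.image_univ, mem_ideal_span_X_image, RingHom.mem_ker, constantCoeff_eq]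
  simp only [Set.mem_univ, true_and]
  constructor
  · intro h
    by_contra h0
    obtain ⟨i, hi⟩ := h 0 (mem_support_iff.mpr h0)
    exact hi rfl
  · intro h m hm
    by_contra! hm0
    rw [show m = 0 from Finsupp.ext hm0] at hm
    exact mem_support_iff.mp hm h

theorem MvPolynomial.isMaximal_span_range_X {k σ : Type*} [Field k] :
    (Ideal.span (Set.range X) : Ideal (MvPolynomial σ k)).IsMaximal := by
  rw [span_range_X_eq_ker_constantCoeff]
  exact RingHom.ker_isMaximal_of_surjective _ fun a => ⟨C a, constantCoeff_C σ a⟩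

namespace IsMonomialIdeal

variable {k : Type*} [Field k] {n : ℕ} {I : Ideal (MvPolynomial (Fin n) k)}

theorem monomial_mem_of_mem_support (hI : IsMonomialIdeal I) {p : MvPolynomial (Fin n) k}
    (hp : p ∈ I) {d : Fin n →₀ ℕ} (hd : d ∈ p.support) : monomial d (1 : k) ∈ I := by
  obtain ⟨S, rfl⟩ := hI
  rw [mem_ideal_span_monomial_image] at hp ⊢
  intro e he
  rw [Finset.mem_singleton.mp (support_monomial_subset he)]
  exact hp d hd

theorem X_mem_radical (hI : IsMonomialIdeal I)
    [FiniteDimensional k (MvPolynomial (Fin n) k ⧸ I)] (i : Fin n) : X i ∈ I.radical := by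
  obtain ⟨q, hq, hqx⟩ := Algebra.IsIntegral.isIntegral (R := k) (Ideal.Quotient.mk I (X i))
  have hqI : q.toMvPolynomial i ∈ I := by
    rw [← Ideal.Quotient.eq_zero_iff_mem, ← Ideal.Quotient.mkₐ_eq_mk k,
      Polynomial.toMvPolynomial, ← Polynomial.aeval_algHom_apply]
    exact hqx
  refine ⟨q.natDegree, ?_⟩
  rw [X_pow_eq_monomial]
  refine hI.monomial_mem_of_mem_support hqI ?_
  rw [mem_support_iff, Polynomial.coeff_toMvPolynomial_single, hq.coeff_natDegree]
  exact one_ne_zero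

theorem span_range_X_le_radical (hI : IsMonomialIdeal I)
    [FiniteDimensional k (MvPolynomial (Fin n) k ⧸ I)] : Ideal.span (Set.range X) ≤ I.radical :=
  Ideal.span_le.mpr (Set.range_subset_iff.mpr hI.X_mem_radical)

end IsMonomialIdeal

theorem envelope_eq_radicals_general {k : Type*} [Field k] {n : ℕ}
    (I : Ideal (MvPolynomial (Fin n) k)) (hI : IsMonomialIdeal I)
    (hIm : I ≤ Ideal.span (Set.range X))
    [FiniteDimensional k (MvPolynomial (Fin n) k ⧸ I)] :
    Submodule.span (MvPolynomial (Fin n) k)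
        {x : MvPolynomial (Fin n) k ⧸ I |
          ∃ (r : MvPolynomial (Fin n) k) (m : MvPolynomial (Fin n) k ⧸ I),
            x = r • m ∧ ∃ t : ℕ, 1 ≤ t ∧ r ^ t • m = 0} =
      (Ideal.span (Set.range X) : Ideal (MvPolynomial (Fin n) k)) •
        (⊤ : Submodule (MvPolynomial (Fin n) k) (MvPolynomial (Fin n) k ⧸ I)) ∧
    Submodule.span (MvPolynomial (Fin n) k)
        {x : MvPolynomial (Fin n) k ⧸ I |
          ∃ (r : MvPolynomial (Fin n) k) (m : MvPolynomial (Fin n) k ⧸ I),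
            x = r • m ∧ ∃ t : ℕ, 1 ≤ t ∧ r ^ t • m = 0} =
      sInf {P : Submodule (MvPolynomial (Fin n) k) (MvPolynomial (Fin n) k ⧸ I) |
          P ≠ ⊤ ∧ ∀ (a : MvPolynomial (Fin n) k) (m : MvPolynomial (Fin n) k ⧸ I),
            a • m ∈ P → m ∈ P ∨ ∀ x : MvPolynomial (Fin n) k ⧸ I, a • x ∈ P} ∧
    Submodule.span (MvPolynomial (Fin n) k)
        {x : MvPolynomial (Fin n) k ⧸ I |
          ∃ (r : MvPolynomial (Fin n) k) (m : MvPolynomial (Fin n) k ⧸ I),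
            x = r • m ∧ ∃ t : ℕ, 1 ≤ t ∧ r ^ t • m = 0} =
      sInf {N : Submodule (MvPolynomial (Fin n) k) (MvPolynomial (Fin n) k ⧸ I) |
          IsCoatom N} := by
  have := isMaximal_span_range_X (k := k) (σ := Fin n)
  have hrad : Ideal.span (Set.range X) ≤
      (Module.annihilator (MvPolynomial (Fin n) k) (MvPolynomial (Fin n) k ⧸ I)).radical := by
    rw [Ideal.annihilator_quotient]
    exact hI.span_range_X_le_radical
  have hcoatom := Ideal.isCoatom_smul_top_quotient hIm
  have hE := Submodule.span_envelope_bot_eq_smul_top hrad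
  exact ⟨hE, hE.trans (Submodule.sInf_isPrime_eq_smul_top hrad
    (Submodule.isPrime_of_isCoatom hcoatom)).symm,
    hE.trans (Module.jacobson_eq_smul_top hrad hcoatom).symm⟩

/-- For `M = R/I` with `I ⊆ m = ⟨x₁,…,xₙ⟩` a monomial ideal and `dim_k R/I < ∞`:
the submodule generated by the envelope of `0`,
`E_M(0) = {r•m : ∃ t ≥ 1, rᵗ•m = 0}`, equals `m·M`; it also equals the prime radical
`β(M)` (the intersection of all prime submodules) and the Jacobson radical `J(M)`
(the intersection of all maximal submodules). Hence `0` satisfies the radical formula. -/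
theorem envelope_eq_radicals {k : Type*} [Field k] [CharZero k] {n : ℕ}
    (I : Ideal (MvPolynomial (Fin n) k)) (hI : IsMonomialIdeal I)
    (hIm : I ≤ Ideal.span (Set.range X))
    [FiniteDimensional k (MvPolynomial (Fin n) k ⧸ I)] :
    Submodule.span (MvPolynomial (Fin n) k)
        {x : MvPolynomial (Fin n) k ⧸ I |
          ∃ (r : MvPolynomial (Fin n) k) (m : MvPolynomial (Fin n) k ⧸ I),
            x = r • m ∧ ∃ t : ℕ, 1 ≤ t ∧ r ^ t • m = 0} =
      (Ideal.span (Set.range X) : Ideal (MvPolynomial (Fin n) k)) •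
        (⊤ : Submodule (MvPolynomial (Fin n) k) (MvPolynomial (Fin n) k ⧸ I)) ∧
    Submodule.span (MvPolynomial (Fin n) k)
        {x : MvPolynomial (Fin n) k ⧸ I |
          ∃ (r : MvPolynomial (Fin n) k) (m : MvPolynomial (Fin n) k ⧸ I),
            x = r • m ∧ ∃ t : ℕ, 1 ≤ t ∧ r ^ t • m = 0} =
      sInf {P : Submodule (MvPolynomial (Fin n) k) (MvPolynomial (Fin n) k ⧸ I) |
          P ≠ ⊤ ∧ ∀ (a : MvPolynomial (Fin n) k) (m : MvPolynomial (Fin n) k ⧸ I),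
            a • m ∈ P → m ∈ P ∨ ∀ x : MvPolynomial (Fin n) k ⧸ I, a • x ∈ P} ∧
    Submodule.span (MvPolynomial (Fin n) k)
        {x : MvPolynomial (Fin n) k ⧸ I |
          ∃ (r : MvPolynomial (Fin n) k) (m : MvPolynomial (Fin n) k ⧸ I),
            x = r • m ∧ ∃ t : ℕ, 1 ≤ t ∧ r ^ t • m = 0} =
      sInf {N : Submodule (MvPolynomial (Fin n) k) (MvPolynomial (Fin n) k ⧸ I) |
          IsCoatom N} :=
  envelope_eq_radicals_general I hI hIm
end
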